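/- arXiv:1310.3843 — 5 statements merged into one kernel-verified Lean document; each statement's English description precedes it below -/
import Mathlib

section
/- For all x ≥ e, the principal branch of the Lambert W function satisfies x·e/ln(x) ≤ e^{W(x)+1} ≤ (x/ln(x))·(1+e). -/
/-!
With `w = W x` we have `x = w e^w`, so `e^{W x + 1} = e x / w` and `ln x = w + ln w`. Since `x ≥ e`
forces `w ≥ 1`, we get `0 ≤ ln w`, whence `w ≤ ln x`, the lower bound. The upper bound amounts to
`e ln w ≤ w`, the tangent-line inequality `e y ≤ e^y` at `y = ln w`.
-/

namespace Real

lemma exp_one_mul_log_le_self {w : ℝ} (hw : 0 < w) : exp 1 * log w ≤ w := by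
  simpa only [exp_log hw] using exp_one_mul_le_exp (x := log w)

lemma one_le_of_exp_one_le_mul_exp {w : ℝ} (h : exp 1 ≤ w * exp w) : 1 ≤ w := by
  by_contra! hw
  rcases le_or_gt w 0 with hw0 | hw0
  · linarith [mul_nonpos_of_nonpos_of_nonneg hw0 (exp_pos w).le, exp_pos 1]
  · linarith [mul_lt_mul'' hw (exp_lt_exp.2 hw) hw0.le (exp_pos w).le]

lemma log_mul_exp_self {w : ℝ} (hw : 0 < w) : log (w * exp w) = log w + w := by
  rw [log_mul hw.ne' (exp_pos w).ne', log_exp]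

lemma le_log_mul_exp_self {w : ℝ} (hw : 1 ≤ w) : w ≤ log (w * exp w) := by
  rw [log_mul_exp_self (one_pos.trans_le hw)]
  linarith [log_nonneg hw]

lemma exp_add_one_eq_div {w : ℝ} (hw : 0 < w) : exp (w + 1) = exp 1 * (w * exp w) / w := by
  rw [exp_add]
  field_simp

variable {w x : ℝ} (hw : 1 ≤ w) (hx : w * exp w = x)
include hw hx

lemma mul_exp_one_div_log_le_exp_add_one : x * exp 1 / log x ≤ exp (w + 1) := by
  subst hx
  have hw0 : 0 < w := one_pos.trans_le hw
  rw [exp_add_one_eq_div hw0, mul_comm _ (exp 1)]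
  gcongr
  exact le_log_mul_exp_self hw

lemma exp_add_one_le_div_log_mul : exp (w + 1) ≤ x / log x * (1 + exp 1) := by
  subst hx
  have hw0 : 0 < w := one_pos.trans_le hw
  have hlog : 0 < log (w * exp w) := hw0.trans_le (le_log_mul_exp_self hw)
  rw [exp_add_one_eq_div hw0, div_mul_eq_mul_div, div_le_div_iff₀ hw0 hlog, log_mul_exp_self hw0]
  have := mul_le_mul_of_nonneg_left (exp_one_mul_log_le_self hw0) (by positivity : 0 ≤ w * exp w)
  nlinarith

end Real

/-- For all `x ≥ e`, the principal branch of the Lambert W function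
(on `[0,∞)`, the unique `y ≥ 0` with `y e^y = x`) satisfies
`x e / ln x ≤ e^{W(x)+1} ≤ (x / ln x) (1 + e)`. -/
theorem stmt_2 (W : ℝ → ℝ)
    (hW : ∀ x ≥ (0 : ℝ), 0 ≤ W x ∧ W x * Real.exp (W x) = x) :
    ∀ x ≥ Real.exp 1,
      x * Real.exp 1 / Real.log x ≤ Real.exp (W x + 1) ∧
        Real.exp (W x + 1) ≤ x / Real.log x * (1 + Real.exp 1) := by
  intro x hx
  obtain ⟨-, hWx⟩ := hW x ((Real.exp_pos 1).le.trans hx)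
  have hW1 : 1 ≤ W x := Real.one_le_of_exp_one_le_mul_exp (hx.trans_eq hWx.symm)
  exact ⟨Real.mul_exp_one_div_log_le_exp_add_one hW1 hWx,
    Real.exp_add_one_le_div_log_mul hW1 hWx⟩
end

section
/- Fix K ≥ 1, T > K, ρ > 0, A > 0, η ∈ (0,1], nonnegative coefficients C_{i,0} (i=0..3) and C_{i,1} (i=0..2) with at least C_{0,1} > 0. Define EE(M) = K(1-K/T)·log₂(1+ρ(M-K)) / (ρKA/η + Σ_{i=0}^{3} C_{i,0}K^i + (Σ_{i=0}^{2} C_{i,1}K^i)·M) for real M ≥ K. Then EE is strictly quasiconcave on [K,∞), equals 0 at M = K, tends to 0 as M → ∞, and attains its unique maximum at M* = (e^{W(x₀)+1} + Kρ - 1)/ρ where x₀ = (ρ²KA/η + ρΣ_i C_{i,0}K^i)/(e·Σ_i C_{i,1}K^i) + (Kρ-1)/e. -/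
/-!
Write `a + b M` for the denominator of `EE` and substitute `t = 1 + ρ (M - K)`. The Lambert
equation for `w` says exactly that `a + b M = (b / ρ) (t + w s)` with `s = e^{w+1}`, so `EE` is a
positive multiple of `log t / (t + w s)`. The tangent line of `log` at `s` gives
`log t < w + t / s` for `t ≠ s`, i.e. `log t / (t + w s) < 1 / s = log s / (s + w s)`: the maximum
sits at `t = s`, which is `M = M*`. Quasiconcavity holds because, the denominator being affine and
positive, the superlevel set `{α ≤ EE}` is the superlevel set `{0 ≤ log t - α (a + b M)}` of a
concave function.
-/

open Filter Real Set Topology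

theorem ConcaveOn.convex_ge_div_affine {s : Set ℝ} {f : ℝ → ℝ} {a b : ℝ} (hf : ConcaveOn ℝ s f)
    (hpos : ∀ x ∈ s, 0 < a + b * x) (α : ℝ) :
    Convex ℝ {x ∈ s | α ≤ f x / (a + b * x)} := by
  have hconc : ConcaveOn ℝ s fun x => f x - α * (a + b * x) := by
    refine ⟨hf.1, fun x hx y hy p q hp hq hpq => ?_⟩
    have h := hf.2 hx hy hp hq hpq
    simp only [smul_eq_mul] at h ⊢
    linear_combination h - α * a * hpq
  convert hconc.convex_ge 0 using 1
  ext x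
  simp only [mem_ofPred_eq, and_congr_right_iff]
  intro hx
  rw [le_div_iff₀ (hpos x hx), sub_nonneg]

theorem concaveOn_log_one_add_mul_sub {ρ : ℝ} (hρ : 0 ≤ ρ) (K : ℝ) :
    ConcaveOn ℝ (Ici K) fun M => log (1 + ρ * (M - K)) := by
  refine ⟨convex_Ici K, fun x hx y hy p q hp hq hpq => ?_⟩
  have hx' : 1 + ρ * (x - K) ∈ Ioi 0 := by
    simp only [mem_Ioi]; nlinarith [mem_Ici.mp hx]
  have hy' : 1 + ρ * (y - K) ∈ Ioi 0 := by
    simp only [mem_Ioi]; nlinarith [mem_Ici.mp hy]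
  have h := strictConcaveOn_log_Ioi.concaveOn.2 hx' hy' hp hq hpq
  simp only [smul_eq_mul] at h ⊢
  convert h using 2
  linear_combination (ρ * K - 1) * hpq

theorem tendsto_log_one_add_mul_sub_div_atTop (a : ℝ) {b ρ : ℝ} (hb : b ≠ 0) (hρ : 0 < ρ)
    (K : ℝ) : Tendsto (fun M => log (1 + ρ * (M - K)) / (a + b * M)) atTop (𝓝 0) := by
  have ht : Tendsto (fun M => 1 + ρ * (M - K)) atTop atTop :=
    tendsto_atTop_add_const_left _ 1
      ((tendsto_atTop_add_const_right _ (-K) tendsto_id).const_mul_atTop hρ)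
  refine ((tendsto_pow_log_div_mul_add_atTop (b / ρ) (a + b * K - b / ρ) 1
    (div_ne_zero hb hρ.ne')).comp ht).congr fun M => ?_
  simp only [Function.comp_apply, pow_one]
  congr 1
  field_simp
  ring

theorem log_div_add_mul_exp_lt {t w : ℝ} (hw : -1 < w) (ht : 0 < t)
    (hden : 0 < t + w * exp (w + 1)) (hne : t ≠ exp (w + 1)) :
    log t / (t + w * exp (w + 1)) < log (exp (w + 1)) / (exp (w + 1) + w * exp (w + 1)) := by
  set s := exp (w + 1)
  have hs : 0 < s := exp_pos _
  have htangent : log (t / s) < t / s - 1 :=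
    log_lt_sub_one_of_pos (div_pos ht hs) (by rwa [ne_eq, div_eq_one_iff_eq hs.ne'])
  rw [log_div ht.ne' hs.ne', log_exp] at htangent
  rw [log_exp, show s + w * s = (w + 1) * s by ring, div_mul_cancel_left₀ (by linarith),
    div_lt_iff₀ hden, show s⁻¹ * (t + w * s) = t / s + w by field_simp]
  linarith

theorem log_one_add_mul_sub_div_lt {a b ρ K w M : ℝ} (hb : 0 < b) (hρ : 0 < ρ) (hw : -1 < w)
    (hpos : 0 < a + b * K) (hq : b * w * exp (w + 1) = ρ * a + b * (K * ρ - 1))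
    (hM : K ≤ M) (hne : M ≠ (exp (w + 1) + K * ρ - 1) / ρ) :
    log (1 + ρ * (M - K)) / (a + b * M) <
      log (1 + ρ * ((exp (w + 1) + K * ρ - 1) / ρ - K)) /
        (a + b * ((exp (w + 1) + K * ρ - 1) / ρ)) := by
  have hden : ∀ x, a + b * x = b / ρ * (1 + ρ * (x - K) + w * exp (w + 1)) := fun x => by
    field_simp
    linear_combination -hq
  have hscale : ∀ y z : ℝ, y / (b / ρ * z) = ρ / b * (y / z) := fun y z => by field_simp
  have htop : 1 + ρ * ((exp (w + 1) + K * ρ - 1) / ρ - K) = exp (w + 1) := by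
    field_simp
    ring
  have htpos : 0 < 1 + ρ * (M - K) := by nlinarith
  have hdenpos : 0 < 1 + ρ * (M - K) + w * exp (w + 1) := by
    have hM' : 0 < b / ρ * (1 + ρ * (M - K) + w * exp (w + 1)) := by rw [← hden]; nlinarith
    exact pos_of_mul_pos_right hM' (div_pos hb hρ).le
  rw [hden, hden, hscale, hscale, htop]
  refine mul_lt_mul_of_pos_left (log_div_add_mul_exp_lt hw htpos hdenpos fun h => hne ?_)
    (div_pos hρ hb)
  rw [eq_div_iff hρ.ne']
  linarith

theorem stmt_4_general (K T ρ A η : ℝ) (C0 : ℕ → ℝ) (C1 : ℕ → ℝ) (w : ℝ)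
    (hK : 1 ≤ K) (hT : K < T) (hρ : 0 < ρ) (hA : 0 < A) (hη : 0 < η)
    (hC0 : ∀ i, 0 ≤ C0 i) (hC1 : ∀ i, 0 ≤ C1 i) (hC01 : 0 < C1 0)
    (hw1 : w * Real.exp w =
      (ρ ^ 2 * K * A / η + ρ * ∑ i ∈ Finset.range 4, C0 i * K ^ i) /
        (Real.exp 1 * ∑ i ∈ Finset.range 3, C1 i * K ^ i) +
        (K * ρ - 1) / Real.exp 1)
    (hw2 : -1 ≤ w) :
    let EE : ℝ → ℝ := fun M =>
      K * (1 - K / T) * Real.logb 2 (1 + ρ * (M - K)) /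
        (ρ * K * A / η + (∑ i ∈ Finset.range 4, C0 i * K ^ i) +
          (∑ i ∈ Finset.range 3, C1 i * K ^ i) * M)
    let Mstar : ℝ := (Real.exp (w + 1) + K * ρ - 1) / ρ
    (∀ α : ℝ, Convex ℝ {M : ℝ | K ≤ M ∧ α ≤ EE M}) ∧
      EE K = 0 ∧
      Filter.Tendsto EE Filter.atTop (nhds 0) ∧
      K ≤ Mstar ∧
      ∀ M : ℝ, K ≤ M → M ≠ Mstar → EE M < EE Mstar := by
  intro EE Mstar
  have hK0 : 0 < K := by linarith
  set a := ρ * K * A / η + ∑ i ∈ Finset.range 4, C0 i * K ^ i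
  set b := ∑ i ∈ Finset.range 3, C1 i * K ^ i
  set N := K * (1 - K / T) / log 2
  have hb : 0 < b := Finset.sum_pos' (fun i _ => mul_nonneg (hC1 i) (pow_nonneg hK0.le i))
    ⟨0, by simp, by simpa using hC01⟩
  have ha : 0 < a := add_pos_of_pos_of_nonneg (by positivity)
    (Finset.sum_nonneg fun i _ => mul_nonneg (hC0 i) (pow_nonneg hK0.le i))
  have hN : 0 < N := div_pos (mul_pos hK0 (by rw [sub_pos, div_lt_one (by linarith)]; exact hT))
    (log_pos one_lt_two)
  have hpos : ∀ M ∈ Ici K, 0 < a + b * M := fun M hM => by nlinarith [mem_Ici.mp hM]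
  have hEE : EE = fun M => N * (log (1 + ρ * (M - K)) / (a + b * M)) := by
    funext M
    simp only [EE, logb]
    ring
  have hq : b * w * exp (w + 1) = ρ * a + b * (K * ρ - 1) := by
    simp only [a]
    rw [exp_add]
    field_simp at hw1 ⊢
    linear_combination hw1
  have hw : -1 < w := lt_of_le_of_ne hw2 fun h => by
    rw [← h, neg_add_cancel, exp_zero] at hq
    nlinarith [mul_pos hρ ha, mul_pos (mul_pos hK0 hρ) hb]
  rw [hEE]
  refine ⟨fun α => ?_, by simp, ?_, ?_, fun M hM hne => ?_⟩
  · convert (concaveOn_log_one_add_mul_sub hρ.le K).convex_ge_div_affine hpos (α / N) using 1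
    ext M
    simp only [mem_ofPred_eq, mem_Ici, div_le_iff₀' hN]
  · simpa using (tendsto_log_one_add_mul_sub_div_atTop a hb.ne' hρ K).const_mul N
  · rw [le_div_iff₀ hρ]
    linarith [one_le_exp (by linarith : 0 ≤ w + 1)]
  · exact mul_lt_mul_of_pos_left
      (log_one_add_mul_sub_div_lt hb hρ hw (hpos K self_mem_Ici) hq hM hne) hN

/-- With `K ≥ 1`, `T > K`, `ρ > 0`, `A > 0`, `η ∈ (0,1]`, nonnegative
circuit coefficients `C0 i` (i = 0..3) and `C1 i` (i = 0..2) with `C1 0 > 0`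
(i.e. `C_{0,1} > 0`), the ZF energy efficiency
`EE M = K (1-K/T) log₂(1+ρ(M-K)) / (ρKA/η + Σᵢ C0 i Kⁱ + (Σᵢ C1 i Kⁱ) M)`
is strictly quasiconcave on `[K,∞)`, equals 0 at `M = K`, tends to 0 as `M → ∞`,
and attains its unique maximum at `M* = (e^{W(x₀)+1} + Kρ - 1)/ρ`, where `w = W(x₀)`
is the principal Lambert W value at
`x₀ = (ρ²KA/η + ρ Σᵢ C0 i Kⁱ)/(e Σᵢ C1 i Kⁱ) + (Kρ-1)/e`. -/
theorem stmt_4 (K T ρ A η : ℝ) (C0 : ℕ → ℝ) (C1 : ℕ → ℝ) (w : ℝ)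
    (hK : 1 ≤ K) (hT : K < T) (hρ : 0 < ρ) (hA : 0 < A) (hη : 0 < η) (hη1 : η ≤ 1)
    (hC0 : ∀ i, 0 ≤ C0 i) (hC1 : ∀ i, 0 ≤ C1 i) (hC01 : 0 < C1 0)
    (hw1 : w * Real.exp w =
      (ρ ^ 2 * K * A / η + ρ * ∑ i ∈ Finset.range 4, C0 i * K ^ i) /
        (Real.exp 1 * ∑ i ∈ Finset.range 3, C1 i * K ^ i) +
        (K * ρ - 1) / Real.exp 1)
    (hw2 : -1 ≤ w) :
    let EE : ℝ → ℝ := fun M =>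
      K * (1 - K / T) * Real.logb 2 (1 + ρ * (M - K)) /
        (ρ * K * A / η + (∑ i ∈ Finset.range 4, C0 i * K ^ i) +
          (∑ i ∈ Finset.range 3, C1 i * K ^ i) * M)
    let Mstar : ℝ := (Real.exp (w + 1) + K * ρ - 1) / ρ
    (∀ α : ℝ, Convex ℝ {M : ℝ | K ≤ M ∧ α ≤ EE M}) ∧
      EE K = 0 ∧
      Filter.Tendsto EE Filter.atTop (nhds 0) ∧
      K ≤ Mstar ∧
      ∀ M : ℝ, K ≤ M → M ≠ Mstar → EE M < EE Mstar :=
  stmt_4_general K T ρ A η C0 C1 w hK hT hρ hA hη hC0 hC1 hC01 hw1 hw2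
end

section
/- Fix M > K ≥ 1, T > K, A > 0, η ∈ (0,1], and circuit power P_c = Σ_{i=0}^{3} C_{i,0}K^i + Σ_{i=0}^{2} C_{i,1}K^i·M > 0. Define EE(ρ) = K(1-K/T)·log₂(1+ρ(M-K)) / (ρKA/η + P_c) for ρ ≥ 0. Then EE is strictly quasiconcave, equals 0 at ρ = 0, tends to 0 as ρ → ∞, and its unique maximizer is ρ* = (e^{W((M-K)ηP_c/(KAe) - 1/e)+1} - 1)/(M-K), which is strictly positive. -/
/-!
Substituting `u = 1 + ρ (M - K)` turns `EE` into a positive multiple of `log u / (u + d)` with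
`d = w e^{w+1} = (M - K) η Pc / (K A) - 1`, the defining equation of `w` multiplied by `e`.
The derivative of `log u / (u + d)` has the sign of `u + d - u log u`, which is strictly
decreasing on `u ≥ 1` (its derivative is `-log u`) and vanishes exactly at `u = e^{w+1}`.
Hence `EE` strictly increases up to `ρ*` and strictly decreases afterwards, which gives both the
quasiconcavity and the unique maximizer.
-/

open Real Set Filter Topology

section Unimodal

variable {𝕜 β : Type*} [LinearOrder β] {f : 𝕜 → β} {a c : 𝕜}

theorem lt_of_strictMonoOn_Icc_of_strictAntiOn_Ici [LinearOrder 𝕜] (hac : a ≤ c)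
    (hmono : StrictMonoOn f (Icc a c)) (hanti : StrictAntiOn f (Ici c)) {x : 𝕜} (hx : a ≤ x)
    (hxc : x ≠ c) : f x < f c := by
  rcases hxc.lt_or_gt with hlt | hgt
  · exact hmono ⟨hx, hlt.le⟩ ⟨hac, le_rfl⟩ hlt
  · exact hanti le_rfl hgt.le hgt

theorem quasiconcaveOn_Ici_of_monotoneOn_Icc_of_antitoneOn_Ici [Field 𝕜] [LinearOrder 𝕜]
    [IsStrictOrderedRing 𝕜] (hmono : MonotoneOn f (Icc a c)) (hanti : AntitoneOn f (Ici c)) :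
    QuasiconcaveOn 𝕜 (Ici a) f := by
  intro r
  rw [convex_iff_ordConnected]
  refine ⟨fun x hx y hy z hz => ⟨hx.1.trans hz.1, ?_⟩⟩
  rcases le_total z c with hzc | hcz
  · exact hx.2.trans (hmono ⟨hx.1, hz.1.trans hzc⟩ ⟨hx.1.trans hz.1, hzc⟩ hz.1)
  · exact hy.2.trans (hanti hcz (hcz.trans hz.2) hz.2)

end Unimodal

theorem neg_one_lt_mul_exp_add_one {w : ℝ} (hw : -1 < w) : -1 < w * exp (w + 1) := by
  have h := add_one_lt_exp (x := -(w + 1)) (by linarith)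
  have h' := mul_lt_mul_of_pos_right h (exp_pos (w + 1))
  rw [← exp_add, neg_add_cancel, exp_zero] at h'
  linarith

theorem hasDerivAt_log_div_add {u d : ℝ} (hu : 0 < u) (hud : u + d ≠ 0) :
    HasDerivAt (fun u => log u / (u + d)) ((u + d - u * log u) / (u * (u + d) ^ 2)) u := by
  refine ((hasDerivAt_log hu.ne').div ((hasDerivAt_id' u).add_const d) hud).congr_deriv ?_
  field_simp

theorem strictAntiOn_add_sub_mul_log (d : ℝ) :
    StrictAntiOn (fun u => u + d - u * log u) (Ici 1) := by
  have hderiv {u : ℝ} (hu : 0 < u) : HasDerivAt (fun u => u + d - u * log u) (-log u) u := by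
    refine (((hasDerivAt_id' u).add_const d).sub (hasDerivAt_mul_log hu.ne')).congr_deriv ?_
    ring
  refine strictAntiOn_of_deriv_neg (convex_Ici 1) (fun u hu => ?_) (fun u hu => ?_)
  · exact (hderiv (zero_lt_one.trans_le hu)).continuousAt.continuousWithinAt
  · rw [interior_Ici] at hu
    rw [(hderiv (zero_lt_one.trans hu)).deriv, neg_neg_iff_pos]
    exact log_pos hu

section LogDivPeak

variable {w : ℝ}

theorem add_mul_exp_add_one_pos (hw : -1 < w) {u : ℝ} (hu : 1 ≤ u) :
    0 < u + w * exp (w + 1) := by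
  linarith [neg_one_lt_mul_exp_add_one hw]

theorem add_sub_mul_log_eq_zero_at_exp_add_one (w : ℝ) :
    exp (w + 1) + w * exp (w + 1) - exp (w + 1) * log (exp (w + 1)) = 0 := by
  rw [log_exp]
  ring

theorem strictMonoOn_log_div_add_mul_exp (hw : -1 < w) :
    StrictMonoOn (fun u => log u / (u + w * exp (w + 1))) (Icc 1 (exp (w + 1))) := by
  refine strictMonoOn_of_deriv_pos (convex_Icc _ _) (fun u hu => ?_) (fun u hu => ?_)
  · have hd := add_mul_exp_add_one_pos hw hu.1
    exact (hasDerivAt_log_div_add (zero_lt_one.trans_le hu.1) hd.ne').continuousAt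
      |>.continuousWithinAt
  · rw [interior_Icc] at hu
    have hd := add_mul_exp_add_one_pos hw hu.1.le
    have hu0 : 0 < u := zero_lt_one.trans hu.1
    rw [(hasDerivAt_log_div_add hu0 hd.ne').deriv]
    have hnum := strictAntiOn_add_sub_mul_log (w * exp (w + 1)) hu.1.le
      (one_le_exp (by linarith)) hu.2
    beta_reduce at hnum
    rw [add_sub_mul_log_eq_zero_at_exp_add_one] at hnum
    exact div_pos hnum (by positivity)

theorem strictAntiOn_log_div_add_mul_exp (hw : -1 < w) :
    StrictAntiOn (fun u => log u / (u + w * exp (w + 1))) (Ici (exp (w + 1))) := by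
  have hone : 1 ≤ exp (w + 1) := one_le_exp (by linarith)
  refine strictAntiOn_of_deriv_neg (convex_Ici _) (fun u hu => ?_) (fun u hu => ?_)
  · have hu0 : 0 < u := zero_lt_one.trans_le (hone.trans hu)
    have hd := add_mul_exp_add_one_pos hw (hone.trans hu)
    exact (hasDerivAt_log_div_add hu0 hd.ne').continuousAt.continuousWithinAt
  · rw [interior_Ici] at hu
    have hd := add_mul_exp_add_one_pos hw (hone.trans hu.le)
    have hu0 : 0 < u := zero_lt_one.trans_le (hone.trans hu.le)
    rw [(hasDerivAt_log_div_add hu0 hd.ne').deriv]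
    have hnum := strictAntiOn_add_sub_mul_log (w * exp (w + 1)) hone (hone.trans hu.le) hu
    beta_reduce at hnum
    rw [add_sub_mul_log_eq_zero_at_exp_add_one] at hnum
    exact div_neg_of_neg_of_pos hnum (by positivity)

end LogDivPeak

section LambertW

variable {w x : ℝ}

theorem neg_one_lt_of_mul_exp_eq_sub (hx : 0 < x) (hw : -1 ≤ w)
    (h : w * exp w = x - 1 / exp 1) : -1 < w := by
  refine hw.lt_of_ne fun hw' => ?_
  rw [← hw', exp_neg, neg_one_mul, ← one_div] at h
  linarith

theorem mul_exp_add_one_eq_of_mul_exp_eq_sub (h : w * exp w = x - 1 / exp 1) :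
    w * exp (w + 1) = x * exp 1 - 1 := by
  rw [exp_add, ← mul_assoc, h]
  field_simp

end LambertW

section AffineReparametrization

variable {m w : ℝ}

theorem strictMono_one_add_mul (hm : 0 < m) : StrictMono fun ρ : ℝ => 1 + ρ * m :=
  fun _ _ h => by dsimp only; nlinarith

theorem one_add_mul_exp_sub_one_div (hm : 0 < m) : 1 + (exp (w + 1) - 1) / m * m = exp (w + 1) := by
  field_simp
  ring

theorem strictMonoOn_log_one_add_mul_div (hm : 0 < m) (hw : -1 < w) :
    StrictMonoOn (fun ρ => log (1 + ρ * m) / (1 + ρ * m + w * exp (w + 1)))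
      (Icc 0 ((exp (w + 1) - 1) / m)) := by
  refine (strictMonoOn_log_div_add_mul_exp hw).comp ((strictMono_one_add_mul hm).strictMonoOn _) ?_
  simpa [one_add_mul_exp_sub_one_div hm] using
    (strictMono_one_add_mul hm).monotone.mapsTo_Icc (a := 0) (b := (exp (w + 1) - 1) / m)

theorem strictAntiOn_log_one_add_mul_div (hm : 0 < m) (hw : -1 < w) :
    StrictAntiOn (fun ρ => log (1 + ρ * m) / (1 + ρ * m + w * exp (w + 1)))
      (Ici ((exp (w + 1) - 1) / m)) := by
  refine (strictAntiOn_log_div_add_mul_exp hw).comp_strictMonoOn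
    ((strictMono_one_add_mul hm).strictMonoOn _) ?_
  simpa [one_add_mul_exp_sub_one_div hm] using
    (strictMono_one_add_mul hm).monotone.mapsTo_Ici (a := (exp (w + 1) - 1) / m)

theorem tendsto_log_one_add_mul_div (hm : 0 < m) (d : ℝ) :
    Tendsto (fun ρ => log (1 + ρ * m) / (1 + ρ * m + d)) atTop (𝓝 0) := by
  have hφ : Tendsto (fun ρ => 1 + ρ * m) atTop atTop :=
    tendsto_atTop_add_const_left _ _ (tendsto_id.atTop_mul_const hm)
  simpa [Function.comp_def] using (tendsto_pow_log_div_mul_add_atTop 1 d 1 one_ne_zero).comp hφ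

end AffineReparametrization

theorem stmt_5_general (M K T A η Pc : ℝ) (w : ℝ)
    (hK : 1 ≤ K) (hM : K < M) (hT : K < T) (hA : 0 < A) (hη : 0 < η)
    (hPcpos : 0 < Pc)
    (hw1 : w * Real.exp w =
      (M - K) * η * Pc / (K * A * Real.exp 1) - 1 / Real.exp 1)
    (hw2 : -1 ≤ w) :
    let EE : ℝ → ℝ := fun ρ =>
      K * (1 - K / T) * Real.logb 2 (1 + ρ * (M - K)) / (ρ * K * A / η + Pc)
    let ρstar : ℝ := (Real.exp (w + 1) - 1) / (M - K)
    (∀ α : ℝ, Convex ℝ {ρ : ℝ | 0 ≤ ρ ∧ α ≤ EE ρ}) ∧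
      EE 0 = 0 ∧
      Filter.Tendsto EE Filter.atTop (nhds 0) ∧
      0 < ρstar ∧
      ∀ ρ : ℝ, 0 ≤ ρ → ρ ≠ ρstar → EE ρ < EE ρstar := by
  intro EE ρstar
  have hm : 0 < M - K := sub_pos.2 hM
  have hw : -1 < w := neg_one_lt_of_mul_exp_eq_sub (by positivity) hw2 hw1
  set C := K * (1 - K / T) / log 2 * ((M - K) * η / (K * A))
  have hC : 0 < C := by
    have : 0 < 1 - K / T := sub_pos.2 ((div_lt_one (by linarith)).2 hT)
    have : 0 < log 2 := log_pos one_lt_two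
    positivity
  have hEE :
      EE = fun ρ => C * (log (1 + ρ * (M - K)) / (1 + ρ * (M - K) + w * exp (w + 1))) := by
    funext ρ
    have hden :
        1 + ρ * (M - K) + w * exp (w + 1) = (M - K) * η / (K * A) * (ρ * K * A / η + Pc) := by
      rw [mul_exp_add_one_eq_of_mul_exp_eq_sub hw1]
      field_simp
      ring
    simp only [EE, hden, C, logb]
    -- the denominator may vanish, so it is kept as an opaque factor on both sides
    generalize ρ * K * A / η + Pc = D
    field_simp
  have hmono : StrictMonoOn EE (Icc 0 ρstar) :=
    hEE ▸ (strictMono_mul_left_of_pos hC).comp_strictMonoOn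
      (strictMonoOn_log_one_add_mul_div hm hw)
  have hanti : StrictAntiOn EE (Ici ρstar) :=
    hEE ▸ (strictMono_mul_left_of_pos hC).comp_strictAntiOn
      (strictAntiOn_log_one_add_mul_div hm hw)
  have hρstar : 0 < ρstar :=
    div_pos (sub_pos.2 (one_lt_exp_iff.2 (neg_lt_iff_pos_add.1 hw))) hm
  refine ⟨quasiconcaveOn_Ici_of_monotoneOn_Icc_of_antitoneOn_Ici hmono.monotoneOn
    hanti.antitoneOn, by simp [EE], ?_, hρstar,
    fun ρ hρ hne => lt_of_strictMonoOn_Icc_of_strictAntiOn_Ici hρstar.le hmono hanti hρ hne⟩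
  simpa [hEE] using (tendsto_log_one_add_mul_div hm _).const_mul C

/-- With `M > K ≥ 1`, `T > K`, `A > 0`, `η ∈ (0,1]`, and circuit power
`Pc = Σᵢ C0 i Kⁱ + (Σᵢ C1 i Kⁱ) M > 0`, the energy efficiency
`EE ρ = K (1-K/T) log₂(1+ρ(M-K)) / (ρKA/η + Pc)` is strictly quasiconcave on
`[0,∞)`, equals 0 at `ρ = 0`, tends to 0 as `ρ → ∞`, and its unique maximizer is
`ρ* = (e^{W((M-K)ηPc/(KAe) - 1/e)+1} - 1)/(M-K)`, which is strictly positive. -/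
theorem stmt_5 (M K T A η Pc : ℝ) (C0 : ℕ → ℝ) (C1 : ℕ → ℝ) (w : ℝ)
    (hK : 1 ≤ K) (hM : K < M) (hT : K < T) (hA : 0 < A) (hη : 0 < η) (hη1 : η ≤ 1)
    (hPc : Pc = (∑ i ∈ Finset.range 4, C0 i * K ^ i) +
      (∑ i ∈ Finset.range 3, C1 i * K ^ i) * M)
    (hPcpos : 0 < Pc)
    (hw1 : w * Real.exp w =
      (M - K) * η * Pc / (K * A * Real.exp 1) - 1 / Real.exp 1)
    (hw2 : -1 ≤ w) :
    let EE : ℝ → ℝ := fun ρ =>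
      K * (1 - K / T) * Real.logb 2 (1 + ρ * (M - K)) / (ρ * K * A / η + Pc)
    let ρstar : ℝ := (Real.exp (w + 1) - 1) / (M - K)
    (∀ α : ℝ, Convex ℝ {ρ : ℝ | 0 ≤ ρ ∧ α ≤ EE ρ}) ∧
      EE 0 = 0 ∧
      Filter.Tendsto EE Filter.atTop (nhds 0) ∧
      0 < ρstar ∧
      ∀ ρ : ℝ, 0 ≤ ρ → ρ ≠ ρstar → EE ρ < EE ρstar :=
  stmt_5_general M K T A η Pc w hK hM hT hA hη hPcpos hw1 hw2
end

section
/- Let ρ*(M) = (e^{W((M-K)·(C̃₀ + C̃₁M)/e - 1/e)+1} - 1)/(M-K) with constants C̃₀ ≥ 0, C̃₁ > 0 and K fixed. Then for all sufficiently large M, ρ*(M) ≥ [(C̃₀ + C̃₁M) - ln((M-K)(C̃₀+C̃₁M) - 1)/(M-K)] / [ln((M-K)(C̃₀+C̃₁M) - 1) - 1], and consequently ρ*(M) = Ω(M/ln M) as M → ∞. -/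
/-!
With `q = (M - K)(C̃₀ + C̃₁M) - 1` and `x = q / e`, the value `w = W(x)` satisfies `w e^{w+1} = q`.
Once `x ≥ e` we have `w ≥ 1`, hence `log x = w + log w ≥ w` and `e^{w+1} = x e / w ≥ x e / log x`;
the first bound is this inequality rewritten in terms of `q`. Since `q` grows like `C̃₁M²`, we have
`log q ≤ 3 log M`, so `e^{w+1}` is at least of order `M² / log M` and `ρ*(M)` of order `M / log M`.
-/

open Real Filter

lemma one_le_of_mul_exp_eq {w x : ℝ} (hw : w * exp w = x) (hx : exp 1 ≤ x) : 1 ≤ w := by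
  by_contra! h
  have : exp w < exp 1 := exp_lt_exp.2 h
  nlinarith [exp_pos w]

lemma mul_exp_one_div_log_le_exp_add_one {w x : ℝ} (hw : w * exp w = x) (hx : exp 1 ≤ x) :
    x * exp 1 / log x ≤ exp (w + 1) := by
  have hw1 : 1 ≤ w := one_le_of_mul_exp_eq hw hx
  have hw0 : 0 < w := by linarith
  have hlog : w ≤ log x := by
    rw [← hw, log_mul hw0.ne' (exp_pos w).ne', log_exp]
    linarith [log_nonneg hw1]
  calc x * exp 1 / log x ≤ x * exp 1 / w :=
        div_le_div_of_nonneg_left (by nlinarith [exp_pos 1]) hw0 hlog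
    _ = exp (w + 1) := by
        rw [div_eq_iff hw0.ne', exp_add, ← hw]
        ring

lemma div_log_sub_one_le_exp_add_one {w q : ℝ} (hw : w * exp w = q / exp 1)
    (hq : exp 2 ≤ q) : q / (log q - 1) ≤ exp (w + 1) := by
  have hx : exp 1 ≤ q / exp 1 := by
    rw [le_div_iff₀ (exp_pos 1), ← exp_add]
    norm_num [hq]
  have hq0 : 0 < q := (exp_pos 2).trans_le hq
  have h := mul_exp_one_div_log_le_exp_add_one hw hx
  rwa [div_mul_cancel₀ q (exp_pos 1).ne', log_div hq0.ne' (exp_pos 1).ne', log_exp] at h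

lemma mul_div_log_le_div_log_sub_one {c d q M : ℝ} (hc : 0 ≤ c) (hM : 1 < M) (hd : 0 < d)
    (hdM : d ≤ 2 * M) (hq : exp 2 ≤ q) (hqM : q ≤ M ^ 3) (hcq : 6 * c * M ^ 2 + 3 * M ≤ q) :
    c * M / log M ≤ (q / (log q - 1) - 1) / d := by
  have hq0 : 0 < q := (exp_pos 2).trans_le hq
  have hL : 0 < log M := log_pos hM
  have hLM : log M ≤ M - 1 := log_le_sub_one_of_pos (by linarith)
  have hlogq : 2 ≤ log q := by rwa [le_log_iff_exp_le hq0]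
  have hlogqM : log q ≤ 3 * log M := by
    simpa using log_le_log hq0 hqM
  calc c * M / log M ≤ (q / (3 * log M) - 1) / d := by
        rw [div_le_div_iff₀ hL hd, sub_mul, div_mul_eq_mul_div, mul_div_mul_right _ _ hL.ne']
        nlinarith [mul_le_mul_of_nonneg_left hdM (mul_nonneg hc (by linarith : (0 : ℝ) ≤ M))]
    _ ≤ (q / (log q - 1) - 1) / d := by
        gcongr
        · linarith
        · linarith

lemma eventually_quadratic_bounds (K C0 C1 : ℝ) (hC0 : 0 ≤ C0) (hC1 : 0 < C1) :
    ∀ᶠ M in atTop, 1 < M ∧ 0 < M - K ∧ M - K ≤ 2 * M ∧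
      exp 2 ≤ (M - K) * (C0 + C1 * M) - 1 ∧ (M - K) * (C0 + C1 * M) - 1 ≤ M ^ 3 ∧
      6 * (C1 / 48) * M ^ 2 + 3 * M ≤ (M - K) * (C0 + C1 * M) - 1 := by
  filter_upwards [eventually_ge_atTop 3, eventually_ge_atTop (2 * |K|),
    eventually_ge_atTop (2 * (C0 + C1)), eventually_ge_atTop ((2 * exp 2 + 24) / C1)]
    with M hM3 hMK hMC hMe
  have hC1M : 2 * exp 2 + 24 ≤ C1 * M := by rwa [div_le_iff₀' hC1] at hMe
  have hK := abs_le.1 (show |K| ≤ M / 2 by linarith)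
  have hlow : C1 * M ^ 2 / 2 ≤ (M - K) * (C0 + C1 * M) := by
    nlinarith [mul_le_mul_of_nonneg_right (show M / 2 ≤ M - K by linarith)
      (show 0 ≤ C0 + C1 * M by positivity)]
  have hsq : (2 * exp 2 + 24) * M ≤ C1 * M ^ 2 := by nlinarith
  refine ⟨by linarith, by linarith, by linarith, by nlinarith [exp_pos 2], ?_,
    by nlinarith [mul_pos (exp_pos 2) (by linarith : (0 : ℝ) < M)]⟩
  have hfac : C0 + C1 * M ≤ (C0 + C1) * M := by nlinarith
  nlinarith [mul_le_mul (show M - K ≤ 2 * M by linarith) hfac (by positivity) (by positivity)]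

lemma sub_div_div_sub_one_eq {p d L : ℝ} (hd : d ≠ 0) (hL : L - 1 ≠ 0) :
    (p - L / d) / (L - 1) = ((d * p - 1) / (L - 1) - 1) / d := by
  field_simp
  ring

/-- For `ρ*(M) = (e^{W((M-K)(C̃₀+C̃₁M)/e - 1/e)+1} - 1)/(M-K)` with
`C̃₀ ≥ 0`, `C̃₁ > 0` and `K` fixed, where `W` is the principal Lambert W branch
(characterized on `[-1/e, ∞)` by `W(x)e^{W(x)} = x` and `W(x) ≥ -1`): for all
sufficiently large `M` the stated lower bound holds, and consequently
`ρ*(M) = Ω(M / ln M)`. -/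
theorem stmt_6 (K C0 C1 : ℝ) (W : ℝ → ℝ)
    (hC0 : 0 ≤ C0) (hC1 : 0 < C1)
    (hW : ∀ x ≥ -(1 / Real.exp 1), W x * Real.exp (W x) = x ∧ -1 ≤ W x) :
    let ρstar : ℝ → ℝ := fun M =>
      (Real.exp (W ((M - K) * (C0 + C1 * M) / Real.exp 1 - 1 / Real.exp 1) + 1) - 1) /
        (M - K)
    (∃ M₀ : ℝ, ∀ M ≥ M₀,
        ρstar M ≥
          ((C0 + C1 * M) - Real.log ((M - K) * (C0 + C1 * M) - 1) / (M - K)) /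
            (Real.log ((M - K) * (C0 + C1 * M) - 1) - 1)) ∧
      ∃ c > (0 : ℝ), ∃ M₁ : ℝ, ∀ M ≥ M₁, ρstar M ≥ c * M / Real.log M := by
  intro ρstar
  obtain ⟨M₀, hM₀⟩ := eventually_atTop.1 (eventually_quadratic_bounds K C0 C1 hC0 hC1)
  have hρ : ∀ M ≥ M₀, (((M - K) * (C0 + C1 * M) - 1) /
      (log ((M - K) * (C0 + C1 * M) - 1) - 1) - 1) / (M - K) ≤ ρstar M := by
    intro M hM
    obtain ⟨-, hMK, -, hq, -⟩ := hM₀ M hM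
    have hx0 : -(1 / exp 1) ≤ ((M - K) * (C0 + C1 * M) - 1) / exp 1 :=
      (neg_nonpos.2 (by positivity)).trans (div_nonneg (by linarith [exp_pos 2]) (exp_pos 1).le)
    show _ ≤ (exp (W _ + 1) - 1) / (M - K)
    rw [← sub_div]
    gcongr
    exact div_log_sub_one_le_exp_add_one (hW _ hx0).1 hq
  refine ⟨⟨M₀, fun M hM => ?_⟩, C1 / 48, by positivity, M₀, fun M hM => ?_⟩
  · obtain ⟨-, hMK, -, hq, -⟩ := hM₀ M hM
    have hlog : 2 ≤ log ((M - K) * (C0 + C1 * M) - 1) :=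
      (le_log_iff_exp_le ((exp_pos 2).trans_le hq)).2 hq
    rw [ge_iff_le, sub_div_div_sub_one_eq hMK.ne' (by linarith)]
    exact hρ M hM
  · obtain ⟨hM1, hMK, hMK2, hq, hqM, hcq⟩ := hM₀ M hM
    exact (mul_div_log_le_div_log_sub_one (by positivity) hM1 hMK hMK2 hq hqM hcq).trans (hρ M hM)
end

section
/- The optimal K* = √((bc₀/s)² + c₀a/s) - bc₀/s, where s = ac₂ + bc₁, is a strictly decreasing function of s for fixed a, b, c₀ > 0, and a strictly increasing function of c₀ for fixed a, b, s > 0. -/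
/-! With `t = c₀ / s` the quantity is `√((b t)² + a t) - b t`, and rationalizing gives
`a / (√(b² + a / t) + b)`, which is strictly increasing in `t > 0`. Since `c₀ / s` is strictly
decreasing in `s` and strictly increasing in `c₀`, both monotonicity claims follow. -/

lemma sqrt_sq_add_sub_self_eq_div {p q : ℝ} (hp : 0 ≤ p) (hq : 0 < q) :
    √(p ^ 2 + q) - p = q / (√(p ^ 2 + q) + p) := by
  have hpos : 0 < √(p ^ 2 + q) + p := by positivity
  rw [eq_div_iff hpos.ne']
  linear_combination Real.sq_sqrt (by positivity : 0 ≤ p ^ 2 + q)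

lemma sqrt_mul_sq_add_sub_eq_div {a b t : ℝ} (ha : 0 < a) (hb : 0 ≤ b) (ht : 0 < t) :
    √((b * t) ^ 2 + a * t) - b * t = a / (√(b ^ 2 + a / t) + b) := by
  have hsqrt : √((b * t) ^ 2 + a * t) = t * √(b ^ 2 + a / t) := by
    rw [show (b * t) ^ 2 + a * t = t ^ 2 * (b ^ 2 + a / t) by field_simp,
      Real.sqrt_mul (sq_nonneg t), Real.sqrt_sq ht.le]
  rw [sqrt_sq_add_sub_self_eq_div (by positivity) (by positivity), hsqrt, mul_comm b t,
    ← mul_add, mul_comm a t, mul_div_mul_left _ _ ht.ne']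

lemma strictMonoOn_sqrt_mul_sq_add_sub {a b : ℝ} (ha : 0 < a) (hb : 0 ≤ b) :
    StrictMonoOn (fun t : ℝ => √((b * t) ^ 2 + a * t) - b * t) (Set.Ioi 0) := by
  intro t₁ (ht₁ : 0 < t₁) t₂ (ht₂ : 0 < t₂) hlt
  simp only [sqrt_mul_sq_add_sub_eq_div ha hb ht₁, sqrt_mul_sq_add_sub_eq_div ha hb ht₂]
  have hsqrt : √(b ^ 2 + a / t₂) < √(b ^ 2 + a / t₁) :=
    Real.sqrt_lt_sqrt (by positivity) (by gcongr)
  exact div_lt_div_of_pos_left ha (by positivity) (by linarith)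

/-- `K*(s, c₀) = √((bc₀/s)² + c₀a/s) - bc₀/s` is strictly decreasing
in `s > 0` for fixed `a, b, c₀ > 0`, and strictly increasing in `c₀ > 0` for fixed
`a, b, s > 0`. -/
theorem stmt_11 (a b : ℝ) (ha : 0 < a) (hb : 0 < b) :
    (∀ c0 : ℝ, 0 < c0 →
      StrictAntiOn (fun s : ℝ =>
        Real.sqrt ((b * c0 / s) ^ 2 + c0 * a / s) - b * c0 / s) (Set.Ioi 0)) ∧
    (∀ s : ℝ, 0 < s →
      StrictMonoOn (fun c0 : ℝ =>
        Real.sqrt ((b * c0 / s) ^ 2 + c0 * a / s) - b * c0 / s) (Set.Ioi 0)) := by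
  have hK (s c0 : ℝ) : Real.sqrt ((b * c0 / s) ^ 2 + c0 * a / s) - b * c0 / s =
      √((b * (c0 / s)) ^ 2 + a * (c0 / s)) - b * (c0 / s) := by
    rw [mul_div_assoc, mul_comm c0 a, mul_div_assoc]
  simp only [hK]
  refine ⟨fun c0 hc0 => ?_, fun s hs => ?_⟩
  · exact (strictMonoOn_sqrt_mul_sq_add_sub ha hb.le).comp_strictAntiOn
      (fun s₁ hs₁ s₂ _ hlt => div_lt_div_of_pos_left hc0 hs₁ hlt)
      (fun s hs => div_pos hc0 hs)
  · exact (strictMonoOn_sqrt_mul_sq_add_sub ha hb.le).comp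
      ((strictMono_div_right_of_pos hs).strictMonoOn _)
      (fun c0 hc0 => div_pos hc0 hs)
end
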